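/- Let d > m ≥ 1 be integers, t, c ∈ ℂ \ {0}, and Q(z) = t·z^d + c·z^m. (Forward direction) Suppose θ₁ < θ₀ < θ₂ are real numbers with t·e^{i(d+2)θ₀} a positive real number, and suppose that for every θ ∈ (θ₁,θ₂): t·e^{i(d+2)θ} ∉ (−∞,0), c·e^{i(m+2)θ} ∉ (−∞,0), and (−c/t)·e^{−i(d−m)θ} ∉ (0,∞). Then every θ ∈ (θ₁,θ₂) is a good ray for Q. (Converse) If θ is a good ray for Q, then there exist θ₁ < θ₂ with θ ∈ (θ₁,θ₂) and some θ₀ ∈ (θ₁,θ₂) with t·e^{i(d+2)θ₀} ∈ (0,∞), such that for every φ ∈ (θ₁,θ₂): t·e^{i(d+2)φ} ∉ (−∞,0), c·e^{i(m+2)φ} ∉ (−∞,0), and (−c/t)·e^{−i(d−m)φ} ∉ (0,∞). (Every sector of the partition determined by the Stokes lines of the two monomials and the rays through turning points that contains an anti-Stokes ray of t z^d is good, and every good ray lies in such a sector.) -/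

import Mathlib

/-!
Put `A(φ) = t e^{i(d+2)φ}` and `B(φ) = c e^{i(m+2)φ}`. On the ray `z = r e^{iφ}` one has
`z² Q(z) = r^{d+2} A(φ) + r^{m+2} B(φ)`, and `(-c/t) e^{-i(d-m)φ} = -B(φ)/A(φ)`. Write
`A = ‖t‖ e^{iα(φ)}`, `B = ‖c‖ e^{iβ(φ)}` with `α, β` affine in `φ`. The three sector conditions say
that none of `α`, `β`, `β - α` meets an odd multiple of `π`, so by the intermediate value theorem
they stay in `(-π, π)` on a sector where they start there, e.g. at an anti-Stokes direction
(`α = 0`). For such angles no positive combination `R e^{iα} + S e^{iβ}` is a nonpositive real,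
while for `|β - α| ≥ π` one is; as `r^{d-m}` takes every positive value, this is exactly
condition (iv). Conversely, for a good ray the three angles lie in `(-π, π)`, and the directions
where they do form an open interval reaching an anti-Stokes direction.
-/

open Complex

/-- The direction `θ` (i.e. the ray `L(θ) = {r e^{iθ} : r > 0}`) is a *good ray* for the
binomial `Q(z) = t z^d + c z^m`:
(i) `L(θ)` is not a Stokes line of `t z^d dz²`;
(ii) `L(θ)` is not a Stokes line of `c z^m dz²`;
(iii) `L(θ)` contains no turning point of `Q`;
(iv) `L(θ)` is not tangent to any vertical trajectory of `Q(z)dz²`. -/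
def GoodRay (d m : ℕ) (t c : ℂ) (θ : ℝ) : Prop :=
  (¬ ∃ x : ℝ, x < 0 ∧ t * Complex.exp ((((d : ℝ) + 2) * θ : ℂ) * Complex.I) = (x : ℂ)) ∧
  (¬ ∃ x : ℝ, x < 0 ∧ c * Complex.exp ((((m : ℝ) + 2) * θ : ℂ) * Complex.I) = (x : ℂ)) ∧
  (∀ r : ℝ, 0 < r →
    t * ((r : ℂ) * Complex.exp ((θ : ℂ) * Complex.I)) ^ d +
      c * ((r : ℂ) * Complex.exp ((θ : ℂ) * Complex.I)) ^ m ≠ 0) ∧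
  (∀ r : ℝ, 0 < r → ¬ ∃ x : ℝ, x ≤ 0 ∧
    ((r : ℂ) * Complex.exp ((θ : ℂ) * Complex.I)) ^ 2 *
      (t * ((r : ℂ) * Complex.exp ((θ : ℂ) * Complex.I)) ^ d +
       c * ((r : ℂ) * Complex.exp ((θ : ℂ) * Complex.I)) ^ m) = (x : ℂ))

open Set
open scoped Real

lemma not_exists_neg_eq_ofReal_mul_exp {R s : ℝ} (hR : 0 < R) (hs : s ∈ Ioo (-π) π) :
    ¬ ∃ x : ℝ, x < 0 ∧ (R : ℂ) * exp (s * I) = x := by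
  rintro ⟨x, hx, h⟩
  have harg := congrArg arg h
  rw [arg_real_mul _ hR, arg_exp_mul_I, (toIocMod_eq_self _).2 ⟨hs.1, by linarith [hs.2]⟩,
    arg_ofReal_of_neg hx] at harg
  exact hs.2.ne harg

lemma arg_mem_Ioo_of_not_exists_neg_eq {w : ℂ} (hw : ¬ ∃ x : ℝ, x < 0 ∧ w = x) :
    arg w ∈ Ioo (-π) π := by
  refine ⟨neg_pi_lt_arg w, arg_lt_pi_iff.2 ?_⟩
  by_contra! h
  exact hw ⟨w.re, h.1, ext rfl (by simpa using h.2)⟩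

lemma mem_Ioo_of_exp_mul_I_ne_neg_one {X : Type*} [TopologicalSpace X] {s : Set X}
    (hs : IsPreconnected s) {f : X → ℝ} (hf : ContinuousOn f s) {x₀ : X} (hx₀ : x₀ ∈ s)
    (h₀ : f x₀ ∈ Ioo (-π) π) (hne : ∀ x ∈ s, exp (f x * I) ≠ -1) {x : X} (hx : x ∈ s) :
    f x ∈ Ioo (-π) π := by
  by_contra h
  rw [mem_Ioo, not_and_or, not_lt, not_lt] at h
  rcases h with h | h
  · obtain ⟨y, hy, hfy⟩ := hs.intermediate_value hx hx₀ hf ⟨h, h₀.1.le⟩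
    exact hne y hy (by rw [hfy, ofReal_neg, neg_mul, exp_neg_pi_mul_I])
  · obtain ⟨y, hy, hfy⟩ := hs.intermediate_value hx₀ hx hf ⟨h₀.2.le, h⟩
    exact hne y hy (by rw [hfy, exp_pi_mul_I])

lemma not_exists_nonpos_eq_ofReal_mul_exp_add {R S α β : ℝ} (hR : 0 < R) (hS : 0 < S)
    (hα : α ∈ Ioo (-π) π) (hβ : β ∈ Ioo (-π) π) (hβα : β - α ∈ Ioo (-π) π) :
    ¬ ∃ x : ℝ, x ≤ 0 ∧ (R : ℂ) * exp (α * I) + S * exp (β * I) = x := by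
  wlog hle : α ≤ β generalizing R S α β
  · rintro ⟨x, hx, h⟩
    exact this hS hR hβ hα ⟨by linarith [hβα.2], by linarith [hβα.1]⟩ (by linarith)
      ⟨x, hx, by rw [add_comm, h]⟩
  rintro ⟨x, hx, h⟩
  have hre : R * Real.cos α + S * Real.cos β = x := by
    simpa [exp_ofReal_mul_I_re] using congrArg re h
  have him : R * Real.sin α + S * Real.sin β = 0 := by
    simpa [exp_ofReal_mul_I_im] using congrArg im h
  rcases hle.eq_or_lt with rfl | hlt
  · have hsin : Real.sin α = 0 := by
      have : (R + S) * Real.sin α = 0 := by linarith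
      exact (mul_eq_zero.1 this).resolve_left (by positivity)
    rw [(Real.sin_eq_zero_iff_of_lt_of_lt hα.1 hα.2).1 hsin, Real.cos_zero] at hre
    linarith
  -- Cramer's rule for the real linear system in `R, S` fixes the signs of `x sin β`, `x sin α`.
  have hsub : 0 < Real.sin (β - α) := Real.sin_pos_of_pos_of_lt_pi (by linarith) hβα.2
  have hxβ : x * Real.sin β = R * Real.sin (β - α) := by
    rw [Real.sin_sub]; linear_combination Real.cos β * him - Real.sin β * hre
  have hxα : x * Real.sin α = -(S * Real.sin (β - α)) := by
    rw [Real.sin_sub]; linear_combination Real.cos α * him - Real.sin α * hre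
  have hβ0 : β < 0 := by
    by_contra! h0
    have := Real.sin_nonneg_of_nonneg_of_le_pi h0 hβ.2.le
    have := mul_pos hR hsub
    nlinarith
  have hα0 : 0 < α := by
    by_contra! h0
    have := Real.sin_nonpos_of_nonpos_of_neg_pi_le h0 hα.1.le
    have := mul_pos hS hsub
    nlinarith
  linarith

lemma exists_pos_nonpos_eq_ofReal_mul_exp_add {α β : ℝ} (hα : α ∈ Ioo (-π) π)
    (hβ : β ∈ Ioo (-π) π) (hβα : π ≤ |β - α|) :
    ∃ R S : ℝ, 0 < R ∧ 0 < S ∧ ∃ x : ℝ, x ≤ 0 ∧ (R : ℂ) * exp (α * I) + S * exp (β * I) = x := by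
  wlog hle : π ≤ β - α generalizing α β
  · obtain ⟨R, S, hR, hS, x, hx, h⟩ :=
      this hβ hα (by rwa [abs_sub_comm]) (by cases abs_cases (β - α) <;> linarith)
    exact ⟨S, R, hS, hR, x, hx, by rw [add_comm, h]⟩
  have hsα : Real.sin α < 0 := Real.sin_neg_of_neg_of_neg_pi_lt (by linarith [hβ.2]) hα.1
  have hsβ : 0 < Real.sin β := Real.sin_pos_of_pos_of_lt_pi (by linarith [hα.1]) hβ.2
  -- `sin β e^{iα} - sin α e^{iβ} = sin (β - α)`
  refine ⟨Real.sin β, -Real.sin α, hsβ, by linarith, Real.sin (β - α), ?_, ?_⟩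
  · rw [← neg_nonneg, ← Real.sin_sub_pi]
    exact Real.sin_nonneg_of_nonneg_of_le_pi (by linarith) (by linarith [hα.1, hβ.2])
  · apply Complex.ext <;>
      simp [exp_ofReal_mul_I_re, exp_ofReal_mul_I_im, sin_ofReal_re, cos_ofReal_re,
        Real.sin_sub] <;> ring

lemma exists_pos_pow_mul_eq {m d : ℕ} (hmd : m < d) {a b : ℝ} (ha : 0 < a) (hb : 0 < b) :
    ∃ r : ℝ, 0 < r ∧ r ^ d * a = r ^ m * b := by
  obtain ⟨k, rfl⟩ := Nat.exists_eq_add_of_le hmd.le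
  have hk : k ≠ 0 := by omega
  refine ⟨(b / a) ^ (k⁻¹ : ℝ), by positivity, ?_⟩
  rw [pow_add, Real.rpow_inv_natCast_pow (by positivity) hk]
  field_simp

lemma exists_Ioo_mem_subset {s : Set ℝ} (hs : IsOpen s) (hs' : s.OrdConnected) {x y : ℝ}
    (hx : x ∈ s) (hy : y ∈ s) : ∃ a b, x ∈ Ioo a b ∧ y ∈ Ioo a b ∧ Ioo a b ⊆ s := by
  wlog hxy : x ≤ y generalizing x y
  · obtain ⟨a, b, h⟩ := this hy hx (le_of_not_ge hxy)
    exact ⟨a, b, h.2.1, h.1, h.2.2⟩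
  obtain ⟨a, _, hxa, hxs⟩ := mem_nhds_iff_exists_Ioo_subset.1 (hs.mem_nhds hx)
  obtain ⟨_, b, hyb, hys⟩ := mem_nhds_iff_exists_Ioo_subset.1 (hs.mem_nhds hy)
  refine ⟨a, b, ⟨hxa.1, hxy.trans_lt hyb.2⟩, ⟨hxa.1.trans_le hxy, hyb.2⟩, fun z hz => ?_⟩
  rcases lt_or_ge z x with hzx | hxz
  · exact hxs ⟨hz.1, hzx.trans hxa.2⟩
  rcases le_or_gt z y with hzy | hyz
  · exact hs'.out hx hy ⟨hxz, hzy⟩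
  · exact hys ⟨hyb.1.trans hyz, hz.2⟩

/-- A continuous branch of `arg (u e^{i(k+2)φ})`, principal at `φ = θ₀`. -/
noncomputable def phase (u : ℂ) (k : ℕ) (θ₀ φ : ℝ) : ℝ :=
  arg (u * exp ((((k : ℝ) + 2) * θ₀ : ℂ) * I)) + ((k : ℝ) + 2) * (φ - θ₀)

lemma phase_self (u : ℂ) (k : ℕ) (θ₀ : ℝ) :
    phase u k θ₀ θ₀ = arg (u * exp ((((k : ℝ) + 2) * θ₀ : ℂ) * I)) := by
  simp [phase]

lemma phase_eq_phase_self_add (u : ℂ) (k : ℕ) (θ₀ φ : ℝ) :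
    phase u k θ₀ φ = phase u k θ₀ θ₀ + ((k : ℝ) + 2) * (φ - θ₀) := by
  simp [phase]

lemma continuous_phase (u : ℂ) (k : ℕ) (θ₀ : ℝ) : Continuous (phase u k θ₀) := by
  unfold phase; fun_prop

lemma monotone_phase (u : ℂ) (k : ℕ) (θ₀ : ℝ) : Monotone (phase u k θ₀) := by
  intro a b hab
  unfold phase
  gcongr

lemma mul_exp_eq_norm_mul_exp_phase (u : ℂ) (k : ℕ) (θ₀ φ : ℝ) :
    u * exp ((((k : ℝ) + 2) * φ : ℂ) * I) = ‖u‖ * exp (phase u k θ₀ φ * I) := by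
  have hnorm : ‖u * exp ((((k : ℝ) + 2) * θ₀ : ℂ) * I)‖ = ‖u‖ := by
    simp [norm_exp]
  calc u * exp ((((k : ℝ) + 2) * φ : ℂ) * I)
      = u * exp ((((k : ℝ) + 2) * θ₀ : ℂ) * I) * exp ((((k : ℝ) + 2) * (φ - θ₀) : ℝ) * I) := by
        rw [mul_assoc u (exp _), ← exp_add]; push_cast; ring_nf
    _ = ‖u‖ * exp (phase u k θ₀ φ * I) := by
        rw [← norm_mul_exp_arg_mul_I (u * exp ((((k : ℝ) + 2) * θ₀ : ℂ) * I)), hnorm, mul_assoc,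
          ← exp_add, phase]
        push_cast
        ring_nf

-- The conditions cutting out the sectors: `L(φ)` is a Stokes line of neither monomial and carries
-- no turning point, as `Q(r e^{iφ}) = 0` iff `r^{d-m} = (-c/t) e^{-i(d-m)φ}`.
def SectorCondition (d m : ℕ) (t c : ℂ) (φ : ℝ) : Prop :=
  (¬ ∃ x : ℝ, x < 0 ∧ t * exp ((((d : ℝ) + 2) * φ : ℂ) * I) = (x : ℂ)) ∧
  (¬ ∃ x : ℝ, x < 0 ∧ c * exp ((((m : ℝ) + 2) * φ : ℂ) * I) = (x : ℂ)) ∧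
  (¬ ∃ x : ℝ, 0 < x ∧ (-c / t) * exp ((-(((d : ℝ) - (m : ℝ)) * φ) : ℂ) * I) = (x : ℂ))

def InSector (d m : ℕ) (t c : ℂ) (θ₀ φ : ℝ) : Prop :=
  phase t d θ₀ φ ∈ Ioo (-π) π ∧ phase c m θ₀ φ ∈ Ioo (-π) π ∧
    phase c m θ₀ φ - phase t d θ₀ φ ∈ Ioo (-π) π

section Binomial

variable {d m : ℕ} {t c : ℂ}

lemma sq_mul_binomial_eq (r θ : ℝ) :
    ((r : ℂ) * exp ((θ : ℂ) * I)) ^ 2 *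
      (t * ((r : ℂ) * exp ((θ : ℂ) * I)) ^ d + c * ((r : ℂ) * exp ((θ : ℂ) * I)) ^ m) =
    (r ^ (d + 2) : ℝ) * (t * exp ((((d : ℝ) + 2) * θ : ℂ) * I)) +
      (r ^ (m + 2) : ℝ) * (c * exp ((((m : ℝ) + 2) * θ : ℂ) * I)) := by
  have hexp (k : ℕ) : exp ((((k : ℝ) + 2) * θ : ℂ) * I) = exp (θ * I) ^ (k + 2) := by
    rw [← exp_nat_mul]; push_cast; ring_nf
  rw [hexp, hexp]
  push_cast
  ring

lemma turning_mul_stokes (ht : t ≠ 0) (φ : ℝ) :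
    (-c / t) * exp ((-(((d : ℝ) - (m : ℝ)) * φ) : ℂ) * I) *
      (t * exp ((((d : ℝ) + 2) * φ : ℂ) * I)) = -(c * exp ((((m : ℝ) + 2) * φ : ℂ) * I)) := by
  rw [mul_mul_mul_comm, ← exp_add]
  field_simp
  ring_nf

lemma turning_eq_norm_div_mul_exp_phase (ht : t ≠ 0) (θ₀ φ : ℝ) :
    (-c / t) * exp ((-(((d : ℝ) - (m : ℝ)) * φ) : ℂ) * I) =
      (‖c‖ / ‖t‖ : ℝ) * -exp ((phase c m θ₀ φ - phase t d θ₀ φ : ℝ) * I) := by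
  have h := turning_mul_stokes (d := d) (m := m) (c := c) ht φ
  rw [mul_exp_eq_norm_mul_exp_phase t d θ₀, mul_exp_eq_norm_mul_exp_phase c m θ₀] at h
  have ht' : (‖t‖ : ℂ) ≠ 0 := by simpa using ht
  rw [eq_div_of_mul_eq (mul_ne_zero ht' (exp_ne_zero _)) h, ofReal_sub, sub_mul, exp_sub]
  push_cast
  field_simp

lemma sectorCondition_of_inSector (ht : t ≠ 0) (hc : c ≠ 0) {θ₀ φ : ℝ}
    (h : InSector d m t c θ₀ φ) : SectorCondition d m t c φ := by
  obtain ⟨hα, hβ, hβα⟩ := h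
  refine ⟨?_, ?_, ?_⟩
  · rw [mul_exp_eq_norm_mul_exp_phase t d θ₀]
    exact not_exists_neg_eq_ofReal_mul_exp (norm_pos_iff.2 ht) hα
  · rw [mul_exp_eq_norm_mul_exp_phase c m θ₀]
    exact not_exists_neg_eq_ofReal_mul_exp (norm_pos_iff.2 hc) hβ
  · rintro ⟨x, hx, hG⟩
    rw [turning_eq_norm_div_mul_exp_phase ht θ₀] at hG
    refine not_exists_neg_eq_ofReal_mul_exp (div_pos (norm_pos_iff.2 hc) (norm_pos_iff.2 ht))
      hβα ⟨-x, by linarith, ?_⟩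
    rw [ofReal_neg]
    linear_combination -hG

lemma goodRay_of_inSector (ht : t ≠ 0) (hc : c ≠ 0) {θ₀ θ : ℝ} (h : InSector d m t c θ₀ θ) :
    GoodRay d m t c θ := by
  have hsq : ∀ r : ℝ, 0 < r → ¬ ∃ x : ℝ, x ≤ 0 ∧
      ((r : ℂ) * exp ((θ : ℂ) * I)) ^ 2 *
        (t * ((r : ℂ) * exp ((θ : ℂ) * I)) ^ d + c * ((r : ℂ) * exp ((θ : ℂ) * I)) ^ m) = x := by
    intro r hr
    rw [sq_mul_binomial_eq, mul_exp_eq_norm_mul_exp_phase t d θ₀,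
      mul_exp_eq_norm_mul_exp_phase c m θ₀, ← mul_assoc, ← mul_assoc, ← ofReal_mul, ← ofReal_mul]
    exact not_exists_nonpos_eq_ofReal_mul_exp_add (mul_pos (pow_pos hr _) (norm_pos_iff.2 ht))
      (mul_pos (pow_pos hr _) (norm_pos_iff.2 hc)) h.1 h.2.1 h.2.2
  obtain ⟨hA, hB, -⟩ := sectorCondition_of_inSector ht hc h
  refine ⟨hA, hB, fun r hr hQ => hsq r hr ⟨0, le_rfl, ?_⟩, hsq⟩
  rw [hQ, mul_zero, ofReal_zero]

lemma inSector_of_sectorCondition (ht : t ≠ 0) (hc : c ≠ 0) {θ₁ θ₀ θ₂ : ℝ}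
    (hθ₀ : θ₀ ∈ Ioo θ₁ θ₂) (hA₀ : ∃ x : ℝ, 0 < x ∧ t * exp ((((d : ℝ) + 2) * θ₀ : ℂ) * I) = x)
    (hs : ∀ φ ∈ Ioo θ₁ θ₂, SectorCondition d m t c φ) :
    ∀ φ ∈ Ioo θ₁ θ₂, InSector d m t c θ₀ φ := by
  obtain ⟨x₀, hx₀, hA₀⟩ := hA₀
  have hα₀ : phase t d θ₀ θ₀ = 0 := by rw [phase_self, hA₀, arg_ofReal_of_nonneg hx₀.le]
  have hβ₀ : phase c m θ₀ θ₀ ∈ Ioo (-π) π := by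
    rw [phase_self]
    exact arg_mem_Ioo_of_not_exists_neg_eq (hs θ₀ hθ₀).2.1
  have hIVT {f : ℝ → ℝ} (hf : Continuous f) (h₀ : f θ₀ ∈ Ioo (-π) π)
      (hne : ∀ ψ ∈ Ioo θ₁ θ₂, exp (f ψ * I) ≠ -1) {φ : ℝ} (hφ : φ ∈ Ioo θ₁ θ₂) :=
    mem_Ioo_of_exp_mul_I_ne_neg_one isPreconnected_Ioo hf.continuousOn hθ₀ h₀ hne hφ
  intro φ hφ
  refine ⟨hIVT (continuous_phase t d θ₀) (by simp [hα₀, Real.pi_pos]) ?_ hφ,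
    hIVT (continuous_phase c m θ₀) hβ₀ ?_ hφ,
    hIVT (f := fun ψ => phase c m θ₀ ψ - phase t d θ₀ ψ)
      ((continuous_phase c m θ₀).sub (continuous_phase t d θ₀)) (by rwa [hα₀, sub_zero]) ?_ hφ⟩
  all_goals intro ψ hψ he
  · refine (hs ψ hψ).1 ⟨-‖t‖, by simpa using ht, ?_⟩
    rw [mul_exp_eq_norm_mul_exp_phase t d θ₀, he]
    push_cast; ring
  · refine (hs ψ hψ).2.1 ⟨-‖c‖, by simpa using hc, ?_⟩
    rw [mul_exp_eq_norm_mul_exp_phase c m θ₀, he]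
    push_cast; ring
  · refine (hs ψ hψ).2.2 ⟨‖c‖ / ‖t‖, by positivity, ?_⟩
    rw [turning_eq_norm_div_mul_exp_phase ht θ₀, he]
    push_cast; ring

lemma inSector_self_of_goodRay (ht : t ≠ 0) (hc : c ≠ 0) (hdm : m < d) {θ : ℝ}
    (h : GoodRay d m t c θ) : InSector d m t c θ θ := by
  obtain ⟨hA, hB, -, hsq⟩ := h
  have hα : phase t d θ θ ∈ Ioo (-π) π := by
    rw [phase_self]; exact arg_mem_Ioo_of_not_exists_neg_eq hA
  have hβ : phase c m θ θ ∈ Ioo (-π) π := by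
    rw [phase_self]; exact arg_mem_Ioo_of_not_exists_neg_eq hB
  refine ⟨hα, hβ, ?_⟩
  by_contra hβα
  obtain ⟨R, S, hR, hS, x, hx, hsum⟩ := exists_pos_nonpos_eq_ofReal_mul_exp_add hα hβ
    (not_lt.1 fun h => hβα (abs_lt.1 h))
  obtain ⟨r, hr, hrR⟩ := exists_pos_pow_mul_eq (by omega : m + 2 < d + 2)
    (mul_pos (norm_pos_iff.2 ht) hS) (mul_pos (norm_pos_iff.2 hc) hR)
  obtain ⟨μ, hμ, hμR, hμS⟩ : ∃ μ : ℝ, 0 < μ ∧ r ^ (d + 2) * ‖t‖ = μ * R ∧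
      r ^ (m + 2) * ‖c‖ = μ * S :=
    ⟨r ^ (m + 2) * ‖c‖ / S, by positivity, by field_simp; linear_combination hrR, by field_simp⟩
  refine hsq r hr ⟨μ * x, mul_nonpos_of_nonneg_of_nonpos hμ.le hx, ?_⟩
  rw [sq_mul_binomial_eq, mul_exp_eq_norm_mul_exp_phase t d θ,
    mul_exp_eq_norm_mul_exp_phase c m θ, ← mul_assoc, ← mul_assoc, ← ofReal_mul, ← ofReal_mul,
    hμR, hμS, ofReal_mul μ x, ← hsum]
  push_cast
  ring

lemma isOpen_setOf_inSector (θ₀ : ℝ) : IsOpen {φ | InSector d m t c θ₀ φ} := by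
  have hα := continuous_phase t d θ₀
  have hβ := continuous_phase c m θ₀
  exact (isOpen_Ioo.preimage hα).inter
    ((isOpen_Ioo.preimage hβ).inter (isOpen_Ioo.preimage (hβ.sub hα)))

lemma ordConnected_setOf_inSector (hdm : m < d) (θ₀ : ℝ) :
    {φ | InSector d m t c θ₀ φ}.OrdConnected := by
  have hanti : Antitone fun φ => phase c m θ₀ φ - phase t d θ₀ φ := by
    intro a b hab
    have : (m : ℝ) < d := by exact_mod_cast hdm
    simp only [phase]
    nlinarith
  exact (ordConnected_Ioo.preimage_mono (monotone_phase t d θ₀)).inter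
    ((ordConnected_Ioo.preimage_mono (monotone_phase c m θ₀)).inter
      (ordConnected_Ioo.preimage_anti hanti))

lemma exists_anti_stokes_inSector (ht : t ≠ 0) (hdm : m < d) {θ : ℝ}
    (h : InSector d m t c θ θ) :
    ∃ θ₀ : ℝ, (∃ x : ℝ, 0 < x ∧ t * exp ((((d : ℝ) + 2) * θ₀ : ℂ) * I) = x) ∧
      InSector d m t c θ θ₀ := by
  obtain ⟨hα, hβ, hβα⟩ := h
  obtain ⟨θ₀, hθ₀⟩ : ∃ θ₀ : ℝ, ((d : ℝ) + 2) * (θ₀ - θ) = -phase t d θ θ :=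
    ⟨θ - phase t d θ θ / ((d : ℝ) + 2), by field_simp; ring⟩
  have hα₀ : phase t d θ θ₀ = 0 := by
    rw [phase_eq_phase_self_add, hθ₀]
    ring
  refine ⟨θ₀, ⟨‖t‖, norm_pos_iff.2 ht, ?_⟩, ?_⟩
  · rw [mul_exp_eq_norm_mul_exp_phase t d θ, hα₀]
    simp
  have : (m : ℝ) < d := by exact_mod_cast hdm
  -- `β₀ + (m+2) s` lies between `β₀` and `β₀ - α₀ = β₀ + (d+2) s`, where `s = θ₀ - θ`
  have hβ₀ : phase c m θ θ₀ ∈ Ioo (-π) π := by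
    rw [phase_eq_phase_self_add c m θ θ₀]
    obtain ⟨hβ₁, hβ₂⟩ := hβ
    obtain ⟨hβα₁, hβα₂⟩ := hβα
    constructor <;> rcases le_total θ θ₀ with hs | hs <;> nlinarith
  rw [InSector, hα₀, sub_zero]
  exact ⟨⟨by linarith [Real.pi_pos], Real.pi_pos⟩, hβ₀, hβ₀⟩

lemma exists_sector_of_goodRay (ht : t ≠ 0) (hc : c ≠ 0) (hdm : m < d) {θ : ℝ}
    (h : GoodRay d m t c θ) :
    ∃ θ₁ θ₂ : ℝ, θ₁ < θ₂ ∧ θ ∈ Ioo θ₁ θ₂ ∧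
      (∃ θ₀ ∈ Ioo θ₁ θ₂, ∃ x : ℝ, 0 < x ∧ t * exp ((((d : ℝ) + 2) * θ₀ : ℂ) * I) = x) ∧
      ∀ φ ∈ Ioo θ₁ θ₂, SectorCondition d m t c φ := by
  have hθ := inSector_self_of_goodRay ht hc hdm h
  obtain ⟨θ₀, hA₀, hθ₀⟩ := exists_anti_stokes_inSector ht hdm hθ
  obtain ⟨θ₁, θ₂, hθ', hθ₀', hsub⟩ := exists_Ioo_mem_subset (isOpen_setOf_inSector θ)
    (ordConnected_setOf_inSector hdm θ) hθ hθ₀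
  exact ⟨θ₁, θ₂, hθ'.1.trans hθ'.2, hθ', ⟨θ₀, hθ₀', hA₀⟩,
    fun φ hφ => sectorCondition_of_inSector ht hc (hsub hφ)⟩

end Binomial

theorem good_sectors_general (d m : ℕ) (hdm : m < d)
    (t c : ℂ) (ht : t ≠ 0) (hc : c ≠ 0) :
    -- Forward direction
    (∀ θ₁ θ₀ θ₂ : ℝ, θ₁ < θ₀ → θ₀ < θ₂ →
      (∃ x : ℝ, 0 < x ∧
        t * Complex.exp ((((d : ℝ) + 2) * θ₀ : ℂ) * Complex.I) = (x : ℂ)) →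
      (∀ θ ∈ Set.Ioo θ₁ θ₂,
        (¬ ∃ x : ℝ, x < 0 ∧
          t * Complex.exp ((((d : ℝ) + 2) * θ : ℂ) * Complex.I) = (x : ℂ)) ∧
        (¬ ∃ x : ℝ, x < 0 ∧
          c * Complex.exp ((((m : ℝ) + 2) * θ : ℂ) * Complex.I) = (x : ℂ)) ∧
        (¬ ∃ x : ℝ, 0 < x ∧
          (-c / t) * Complex.exp ((-(((d : ℝ) - (m : ℝ)) * θ) : ℂ) * Complex.I) = (x : ℂ))) →
      ∀ θ ∈ Set.Ioo θ₁ θ₂, GoodRay d m t c θ) ∧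
    -- Converse
    (∀ θ : ℝ, GoodRay d m t c θ →
      ∃ θ₁ θ₂ : ℝ, θ₁ < θ₂ ∧ θ ∈ Set.Ioo θ₁ θ₂ ∧
        (∃ θ₀ ∈ Set.Ioo θ₁ θ₂, ∃ x : ℝ, 0 < x ∧
          t * Complex.exp ((((d : ℝ) + 2) * θ₀ : ℂ) * Complex.I) = (x : ℂ)) ∧
        ∀ φ ∈ Set.Ioo θ₁ θ₂,
          (¬ ∃ x : ℝ, x < 0 ∧
            t * Complex.exp ((((d : ℝ) + 2) * φ : ℂ) * Complex.I) = (x : ℂ)) ∧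
          (¬ ∃ x : ℝ, x < 0 ∧
            c * Complex.exp ((((m : ℝ) + 2) * φ : ℂ) * Complex.I) = (x : ℂ)) ∧
          (¬ ∃ x : ℝ, 0 < x ∧
            (-c / t) * Complex.exp ((-(((d : ℝ) - (m : ℝ)) * φ) : ℂ) * Complex.I) = (x : ℂ))) := by
  refine ⟨fun θ₁ θ₀ θ₂ h₁ h₂ hA₀ hs θ hθ => ?_, fun θ h => exists_sector_of_goodRay ht hc hdm h⟩
  exact goodRay_of_inSector ht hc (inSector_of_sectorCondition ht hc ⟨h₁, h₂⟩ hA₀ hs θ hθ)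

/-- A sector (of the partition determined by the Stokes lines of the two monomials and the
rays through the turning points) containing an anti-Stokes ray of `t z^d` consists of good
rays, and conversely every good ray lies in such a sector. -/
theorem good_sectors (d m : ℕ) (hm : 1 ≤ m) (hdm : m < d)
    (t c : ℂ) (ht : t ≠ 0) (hc : c ≠ 0) :
    -- Forward direction
    (∀ θ₁ θ₀ θ₂ : ℝ, θ₁ < θ₀ → θ₀ < θ₂ →
      (∃ x : ℝ, 0 < x ∧
        t * Complex.exp ((((d : ℝ) + 2) * θ₀ : ℂ) * Complex.I) = (x : ℂ)) →
      (∀ θ ∈ Set.Ioo θ₁ θ₂,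
        (¬ ∃ x : ℝ, x < 0 ∧
          t * Complex.exp ((((d : ℝ) + 2) * θ : ℂ) * Complex.I) = (x : ℂ)) ∧
        (¬ ∃ x : ℝ, x < 0 ∧
          c * Complex.exp ((((m : ℝ) + 2) * θ : ℂ) * Complex.I) = (x : ℂ)) ∧
        (¬ ∃ x : ℝ, 0 < x ∧
          (-c / t) * Complex.exp ((-(((d : ℝ) - (m : ℝ)) * θ) : ℂ) * Complex.I) = (x : ℂ))) →
      ∀ θ ∈ Set.Ioo θ₁ θ₂, GoodRay d m t c θ) ∧
    -- Converse
    (∀ θ : ℝ, GoodRay d m t c θ →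
      ∃ θ₁ θ₂ : ℝ, θ₁ < θ₂ ∧ θ ∈ Set.Ioo θ₁ θ₂ ∧
        (∃ θ₀ ∈ Set.Ioo θ₁ θ₂, ∃ x : ℝ, 0 < x ∧
          t * Complex.exp ((((d : ℝ) + 2) * θ₀ : ℂ) * Complex.I) = (x : ℂ)) ∧
        ∀ φ ∈ Set.Ioo θ₁ θ₂,
          (¬ ∃ x : ℝ, x < 0 ∧
            t * Complex.exp ((((d : ℝ) + 2) * φ : ℂ) * Complex.I) = (x : ℂ)) ∧
          (¬ ∃ x : ℝ, x < 0 ∧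
            c * Complex.exp ((((m : ℝ) + 2) * φ : ℂ) * Complex.I) = (x : ℂ)) ∧
          (¬ ∃ x : ℝ, 0 < x ∧
            (-c / t) * Complex.exp ((-(((d : ℝ) - (m : ℝ)) * φ) : ℂ) * Complex.I) = (x : ℂ))) :=
  good_sectors_general d m hdm t c ht hc
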